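/- Let n ≥ 1 and let x_1, …, x_n ∈ (0,∞) with empirical distribution function 𝔽(r) := (1/n)·#{i : x_i ≤ r}. Let 𝒦 denote the set of all functions h : [0,∞) → ℝ that are convex on [0,∞) and Lebesgue integrable over [0,∞). Suppose f̂ ∈ 𝒦 is square-integrable and minimizes Φ(h) := ∫_0^∞ h(x)² dx − (2/n)·∑_{i=1}^n h(x_i) over all square-integrable h ∈ 𝒦, and that there are points 0 = t_0 < t_1 < … < t_m with t_m > max_i x_i such that f̂ is affine on each interval [t_{k−1}, t_k], f̂ = 0 on [t_m, ∞), and at each t_k (1 ≤ k ≤ m) the right derivative of f̂ is strictly larger than the left derivative. Let F̂(r) := ∫_0^r f̂(x) dx. Then for every k ∈ {1, …, m} and every r ∈ [t_{k−1}, t_k), ∫_r^{t_k} 𝔽(x) dx ≥ ∫_r^{t_k} F̂(x) dx. -/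

import Mathlib

/-!
Perturb `f̂` in the direction `ψ(v) = (t_k - max r v)⁺ = ∫_r^{t_k} 1{v ≤ u} du`.
Since `ψ = (t_k - ·)⁺ - (r - ·)⁺`, subtracting `εψ` lowers the jump of the derivative of `f̂`
at `t_k` by `ε` and adds a convex kink at `r`, so `f̂ - εψ` stays convex as long as `ε` is below
that jump. Minimality of `f̂` along this ray gives the first-order condition
`∫ f̂ ψ ≤ (1/n) ∑ ψ(xᵢ)`, and by Fubini the two sides are `∫_r^{t_k} F̂` and `∫_r^{t_k} 𝔽`.
-/

open MeasureTheory Set Filter Topology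

section Slope

variable {f : ℝ → ℝ} {a b c : ℝ}

lemma slope_le_slope_of_slope_le_left (hab : a < b) (hbc : b < c)
    (h : slope f a b ≤ slope f b c) : slope f a b ≤ slope f a c := by
  rw [slope_def_field, slope_def_field] at *
  rw [div_le_div_iff₀ (by linarith) (by linarith)] at *
  nlinarith

lemma slope_le_slope_of_slope_le_right (hab : a < b) (hbc : b < c)
    (h : slope f a b ≤ slope f b c) : slope f a c ≤ slope f b c := by
  rw [slope_def_field, slope_def_field] at *
  rw [div_le_div_iff₀ (by linarith) (by linarith)] at *
  nlinarith

end Slope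

section Convex

variable {S : Set ℝ} {f : ℝ → ℝ} {c : ℝ}

theorem convexOn_of_inter_Iic_of_inter_Ici (hS : Convex ℝ S)
    (hle : ConvexOn ℝ (S ∩ Iic c) f) (hge : ConvexOn ℝ (S ∩ Ici c) f)
    (hc : ∀ y ∈ S, ∀ z ∈ S, y < c → c < z → slope f y c ≤ slope f c z) :
    ConvexOn ℝ S f := by
  refine convexOn_of_slope_mono_adjacent hS fun {x y z} hx hz hxy hyz => ?_
  simp only [← slope_def_field]
  have hyS : y ∈ S := hS.ordConnected.out hx hz ⟨hxy.le, hyz.le⟩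
  rcases le_or_gt z c with hzc | hcz
  · simpa only [slope_def_field] using
      hle.slope_mono_adjacent ⟨hx, (hxy.trans hyz).le.trans hzc⟩ ⟨hz, hzc⟩ hxy hyz
  rcases le_or_gt c x with hcx | hxc
  · simpa only [slope_def_field] using
      hge.slope_mono_adjacent ⟨hx, hcx⟩ ⟨hz, hcx.trans (hxy.trans hyz).le⟩ hxy hyz
  have hcS : c ∈ S := hS.ordConnected.out hx hz ⟨hxc.le, hcz.le⟩
  rcases lt_trichotomy y c with hyc | rfl | hcy
  · calc slope f x y ≤ slope f y c := by
          simpa only [slope_def_field] using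
            hle.slope_mono_adjacent ⟨hx, hxc.le⟩ ⟨hcS, le_refl c⟩ hxy hyc
      _ ≤ slope f y z := slope_le_slope_of_slope_le_left hyc hcz (hc y hyS z hz hyc hcz)
  · exact hc x hx z hz hxc hcz
  · calc slope f x y ≤ slope f c y :=
          slope_le_slope_of_slope_le_right hxc hcy (hc x hx y hyS hxc hcy)
      _ ≤ slope f y z := by
          simpa only [slope_def_field] using
            hge.slope_mono_adjacent ⟨hcS, le_refl c⟩ ⟨hz, hcz.le⟩ hcy hyz

lemma ConvexOn.slope_le_derivWithin_Iic (hf : ConvexOn ℝ S f) {y : ℝ} (hy : y ∈ S)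
    (hc : c ∈ interior S) (hyc : y < c) : slope f y c ≤ derivWithin f (Iic c) c := by
  have hd := (hf.hasDerivWithinAt_leftDeriv_of_mem_interior hc).Iic_of_Iio
  rw [hd.derivWithin (uniqueDiffOn_Iic c c self_mem_Iic)]
  exact hf.slope_le_leftDeriv_of_mem_interior hy hc hyc

lemma ConvexOn.derivWithin_Ici_le_slope (hf : ConvexOn ℝ S f) {z : ℝ} (hz : z ∈ S)
    (hc : c ∈ interior S) (hcz : c < z) : derivWithin f (Ici c) c ≤ slope f c z := by
  rw [← derivWithin_Ioi_eq_Ici]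
  exact hf.rightDeriv_le_slope_of_mem_interior hc hz hcz

theorem ConvexOn.sub_mul_max_sub_zero (hf : ConvexOn ℝ S f) (hc : c ∈ interior S) {η : ℝ}
    (hη : η ≤ derivWithin f (Ici c) c - derivWithin f (Iic c) c) :
    ConvexOn ℝ S (fun v => f v - η * max (c - v) 0) := by
  have hS := hf.1
  refine convexOn_of_inter_Iic_of_inter_Ici (c := c) hS ?_ ?_ fun y hy z hz hyc hcz => ?_
  · have hSc := hS.inter (convex_Iic c)
    refine ((hf.subset inter_subset_left hSc).add
      (((LinearMap.mul ℝ ℝ η).convexOn hSc).add_const (-(η * c)))).congr fun v hv => ?_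
    simp [max_eq_left (sub_nonneg.2 (mem_Iic.1 hv.2))]
    ring
  · exact (hf.subset inter_subset_left (hS.inter (convex_Ici c))).congr fun v hv => by
      simp [max_eq_right (sub_nonpos.2 (mem_Ici.1 hv.2))]
  · have hl := hf.slope_le_derivWithin_Iic hy hc hyc
    have hr := hf.derivWithin_Ici_le_slope hz hc hcz
    have hy' : slope (fun v => f v - η * max (c - v) 0) y c = slope f y c + η := by
      have hcy : c - y ≠ 0 := sub_ne_zero.2 hyc.ne'
      simp only [slope_def_field, max_eq_left (sub_nonneg.2 hyc.le), sub_self, max_self]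
      field_simp
      ring
    have hz' : slope (fun v => f v - η * max (c - v) 0) c z = slope f c z := by
      simp only [slope_def_field, max_eq_right (sub_nonpos.2 hcz.le), sub_self, max_self]
      ring
    rw [hy', hz']
    linarith

lemma max_sub_max_zero_eq {r c : ℝ} (hrc : r ≤ c) (v : ℝ) :
    max (c - max r v) 0 = max (c - v) 0 - max (r - v) 0 := by
  rcases le_total v r with hvr | hrv
  · rw [max_eq_left hvr, max_eq_left (by linarith), max_eq_left (by linarith),
      max_eq_left (by linarith)]
    ring
  · rw [max_eq_right hrv, max_eq_right (by linarith : r - v ≤ 0), sub_zero]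

theorem ConvexOn.sub_mul_max_sub_max_zero {r η : ℝ}
    (hf : ConvexOn ℝ S (fun v => f v - η * max (c - v) 0)) (hrc : r ≤ c) (hη : 0 ≤ η) :
    ConvexOn ℝ S (fun v => f v - η * max (c - max r v) 0) := by
  have hS := hf.1
  have hramp : ConvexOn ℝ S (fun v => max (r - v) 0) :=
    ((convexOn_const r hS).sub (concaveOn_id hS)).sup (convexOn_const 0 hS)
  refine (hf.add (hramp.smul hη)).congr fun v _ => ?_
  simp only [Pi.add_apply, max_sub_max_zero_eq hrc, smul_eq_mul]
  ring

end Convex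

section Ramp

variable {r c : ℝ}

lemma continuous_max_sub_max_zero : Continuous fun v : ℝ => max (c - max r v) 0 := by
  fun_prop

lemma norm_max_sub_max_zero_le (v : ℝ) : ‖max (c - max r v) 0‖ ≤ max (c - r) 0 := by
  rw [Real.norm_of_nonneg (le_max_right _ _)]
  exact max_le_max (sub_le_sub_left (le_max_left r v) c) le_rfl

lemma MeasureTheory.IntegrableOn.mul_max_sub_max_zero {g : ℝ → ℝ} {s : Set ℝ}
    (hg : IntegrableOn g s) : IntegrableOn (fun v => g v * max (c - max r v) 0) s :=
  hg.mul_bdd continuous_max_sub_max_zero.aestronglyMeasurable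
    (ae_of_all _ norm_max_sub_max_zero_le)

lemma integrableOn_Ici_max_sub_max_zero (a : ℝ) :
    IntegrableOn (fun v => max (c - max r v) 0) (Ici a) := by
  refine (continuous_max_sub_max_zero.integrableOn_Icc (a := a) (b := c)).of_forall_sdiff_eq_zero
    measurableSet_Ici fun v ⟨hav, hv⟩ => ?_
  have hcv : c < v := lt_of_not_ge fun hvc => hv ⟨hav, hvc⟩
  exact max_eq_right (by linarith [le_max_right r v])

lemma integral_indicator_Ici_one (hrc : r ≤ c) (v : ℝ) :
    ∫ u in r..c, (Ici v).indicator (1 : ℝ → ℝ) u = max (c - max r v) 0 := by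
  have hae : (Ici v).indicator (1 : ℝ → ℝ) =ᵐ[volume] (Ioi v).indicator 1 :=
    indicator_ae_eq_of_ae_eq_set Ioi_ae_eq_Ici.symm
  rw [intervalIntegral.integral_of_le hrc, integral_congr_ae (ae_restrict_of_ae hae),
    setIntegral_indicator measurableSet_Ioi, Ioc_inter_Ioi]
  simp [Real.volume_real_Ioc]

lemma integral_card_filter_le {ι : Type*} [Fintype ι] (x : ι → ℝ) (hrc : r ≤ c) :
    ∫ u in r..c, ((Finset.univ.filter fun i => x i ≤ u).card : ℝ) =
      ∑ i, max (c - max r (x i)) 0 := by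
  have hind : ∀ u, ((Finset.univ.filter fun i => x i ≤ u).card : ℝ) =
      ∑ i, (Ici (x i)).indicator 1 u := fun u => by
    simp only [Finset.natCast_card_filter, indicator_apply, mem_Ici, Pi.one_apply]
  simp only [hind]
  rw [intervalIntegral.integral_finsetSum fun i _ => ?_]
  · exact Finset.sum_congr rfl fun i _ => integral_indicator_Ici_one hrc (x i)
  · exact (intervalIntegrable_iff_integrableOn_Ioc_of_le hrc).2
      ((integrableOn_const (by simp)).indicator measurableSet_Ici)

theorem integral_integral_eq_integral_mul_max_sub_max_zero {f : ℝ → ℝ} {a : ℝ}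
    (hf : IntegrableOn f (Ioc a c)) (har : a ≤ r) (hrc : r ≤ c) :
    ∫ u in r..c, ∫ v in a..u, f v = ∫ v in Ici a, f v * max (c - max r v) 0 := by
  have hinner : ∀ u ∈ Ioc r c,
      ∫ v in a..u, f v = ∫ v in Ioc a c, f v * (Ici v).indicator 1 u := by
    intro u hu
    have : (fun v => f v * (Ici v).indicator (1 : ℝ → ℝ) u) = (Iic u).indicator f := by
      ext v
      by_cases hvu : v ≤ u <;> simp [hvu]
    rw [this, setIntegral_indicator measurableSet_Iic, Ioc_inter_Iic, min_eq_right hu.2,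
      intervalIntegral.integral_of_le (har.trans hu.1.le)]
  have hint : Integrable (Function.uncurry fun u v => f v * (Ici v).indicator (1 : ℝ → ℝ) u)
      ((volume.restrict (Ioc r c)).prod (volume.restrict (Ioc a c))) := by
    have hset : (fun p : ℝ × ℝ => (Ici p.2).indicator (1 : ℝ → ℝ) p.1) =
        {p | p.2 ≤ p.1}.indicator 1 := by
      ext p
      simp [indicator_apply]
    refine (hf.comp_snd _).mul_bdd (c := 1) ?_ (ae_of_all _ fun p => ?_)
    · rw [hset]
      exact (measurable_const.indicator
        (measurableSet_le measurable_snd measurable_fst)).aestronglyMeasurable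
    · by_cases h : p.2 ≤ p.1 <;> simp [h]
  calc ∫ u in r..c, ∫ v in a..u, f v
      = ∫ u in Ioc r c, ∫ v in Ioc a c, f v * (Ici v).indicator 1 u := by
        rw [intervalIntegral.integral_of_le hrc]
        exact setIntegral_congr_fun measurableSet_Ioc hinner
    _ = ∫ v in Ioc a c, ∫ u in Ioc r c, f v * (Ici v).indicator 1 u :=
        integral_integral_swap hint
    _ = ∫ v in Ioc a c, f v * max (c - max r v) 0 := by
        congr 1
        ext v
        rw [integral_const_mul, ← intervalIntegral.integral_of_le hrc,
          integral_indicator_Ici_one hrc]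
    _ = ∫ v in Ici a, f v * max (c - max r v) 0 := by
        rw [← integral_Icc_eq_integral_Ioc]
        refine (setIntegral_eq_of_subset_of_forall_sdiff_eq_zero measurableSet_Ici
          Icc_subset_Ici_self fun v ⟨hav, hv⟩ => ?_).symm
        have hcv : c < v := lt_of_not_ge fun hvc => hv ⟨hav, hvc⟩
        rw [max_eq_right (by linarith [le_max_right r v]), mul_zero]

end Ramp

section Quadratic

variable {s : Set ℝ} {f ψ : ℝ → ℝ}

lemma sub_mul_sq_eq (a b ε : ℝ) :
    (a - ε * b) ^ 2 = a ^ 2 - 2 * ε * (a * b) + ε ^ 2 * b ^ 2 := by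
  ring

lemma integrableOn_sub_mul_sq (hf : IntegrableOn (fun y => f y ^ 2) s)
    (hfψ : IntegrableOn (fun y => f y * ψ y) s) (hψ : IntegrableOn (fun y => ψ y ^ 2) s)
    (ε : ℝ) : IntegrableOn (fun y => (f y - ε * ψ y) ^ 2) s := by
  simp only [sub_mul_sq_eq]
  exact (hf.sub (hfψ.const_mul _)).add (hψ.const_mul _)

lemma integral_sub_mul_sq (hf : IntegrableOn (fun y => f y ^ 2) s)
    (hfψ : IntegrableOn (fun y => f y * ψ y) s) (hψ : IntegrableOn (fun y => ψ y ^ 2) s)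
    (ε : ℝ) : ∫ y in s, (f y - ε * ψ y) ^ 2 =
      (∫ y in s, f y ^ 2) - 2 * ε * (∫ y in s, f y * ψ y) + ε ^ 2 * ∫ y in s, ψ y ^ 2 := by
  have hlin : IntegrableOn (fun y => f y ^ 2 - 2 * ε * (f y * ψ y)) s :=
    hf.sub (hfψ.const_mul _)
  simp only [sub_mul_sq_eq]
  rw [integral_add hlin (hψ.const_mul _), integral_sub hf (hfψ.const_mul _),
    integral_const_mul, integral_const_mul]

end Quadratic

lemma nonneg_of_forall_mul_add_mul_sq_nonneg {a b ε₀ : ℝ} (hε₀ : 0 < ε₀)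
    (h : ∀ ε, 0 < ε → ε < ε₀ → 0 ≤ b * ε + a * ε ^ 2) : 0 ≤ b := by
  have hlim : Tendsto (fun ε => b + a * ε) (𝓝[>] 0) (𝓝 b) := by
    have := ((continuous_const (y := b)).add
      ((continuous_const (y := a)).mul continuous_id)).tendsto' 0 b (by simp)
    exact this.mono_left nhdsWithin_le_nhds
  refine ge_of_tendsto hlim ?_
  filter_upwards [Ioo_mem_nhdsGT hε₀] with ε ⟨hε, hεε₀⟩
  have := h ε hε hεε₀
  exact nonneg_of_mul_nonneg_right (by linarith : 0 ≤ ε * (b + a * ε)) hε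

/-- The least squares criterion `Φ`. -/
noncomputable def lsCriterion {n : ℕ} (x : Fin n → ℝ) (h : ℝ → ℝ) : ℝ :=
  (∫ y in Ici (0 : ℝ), h y ^ 2) - (2 / n) * ∑ i, h (x i)

section FirstVariation

variable {n : ℕ} (x : Fin n → ℝ) {f ψ : ℝ → ℝ}

lemma lsCriterion_sub_mul (hf : IntegrableOn (fun y => f y ^ 2) (Ici 0))
    (hfψ : IntegrableOn (fun y => f y * ψ y) (Ici 0))
    (hψ : IntegrableOn (fun y => ψ y ^ 2) (Ici 0)) (ε : ℝ) :
    lsCriterion x (fun y => f y - ε * ψ y) = lsCriterion x f +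
      2 * ε * ((n : ℝ)⁻¹ * ∑ i, ψ (x i) - ∫ y in Ici 0, f y * ψ y) +
      ε ^ 2 * ∫ y in Ici 0, ψ y ^ 2 := by
  simp only [lsCriterion, integral_sub_mul_sq hf hfψ hψ, Finset.sum_sub_distrib,
    ← Finset.mul_sum]
  ring

theorem integral_mul_le_of_forall_lsCriterion_le (hf : IntegrableOn (fun y => f y ^ 2) (Ici 0))
    (hfψ : IntegrableOn (fun y => f y * ψ y) (Ici 0))
    (hψ : IntegrableOn (fun y => ψ y ^ 2) (Ici 0)) {ε₀ : ℝ} (hε₀ : 0 < ε₀)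
    (hmin : ∀ ε, 0 < ε → ε < ε₀ → lsCriterion x f ≤ lsCriterion x (fun y => f y - ε * ψ y)) :
    ∫ y in Ici 0, f y * ψ y ≤ (n : ℝ)⁻¹ * ∑ i, ψ (x i) := by
  have := nonneg_of_forall_mul_add_mul_sq_nonneg (a := ∫ y in Ici 0, ψ y ^ 2)
    (b := 2 * ((n : ℝ)⁻¹ * ∑ i, ψ (x i) - ∫ y in Ici 0, f y * ψ y)) hε₀ fun ε hε hεε₀ => by
    have := hmin ε hε hεε₀
    rw [lsCriterion_sub_mul x hf hfψ hψ] at this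
    linarith
  linarith

end FirstVariation

theorem lse_backward_integral_inequality_general
    (n : ℕ) (x : Fin n → ℝ)
    (EDF : ℝ → ℝ)
    (hEDF : ∀ r : ℝ, EDF r = (n : ℝ)⁻¹ * (Finset.univ.filter fun i => x i ≤ r).card)
    (fhat : ℝ → ℝ)
    (hfconv : ConvexOn ℝ (Ici 0) fhat) (hfint : IntegrableOn fhat (Ici 0))
    (hfsq : IntegrableOn (fun y => fhat y ^ 2) (Ici 0))
    (hopt : ∀ h : ℝ → ℝ, ConvexOn ℝ (Ici 0) h → IntegrableOn h (Ici 0) →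
      IntegrableOn (fun y => h y ^ 2) (Ici 0) →
      (∫ y in Ici (0 : ℝ), fhat y ^ 2) - (2 / n) * ∑ i, fhat (x i) ≤
        (∫ y in Ici (0 : ℝ), h y ^ 2) - (2 / n) * ∑ i, h (x i))
    (m : ℕ) (t : ℕ → ℝ)
    (ht0 : t 0 = 0) (htlt : ∀ k, k < m → t k < t (k + 1))
    (hkink : ∀ k, 1 ≤ k → k ≤ m →
      derivWithin fhat (Iic (t k)) (t k) < derivWithin fhat (Ici (t k)) (t k)) :
    ∀ k, 1 ≤ k → k ≤ m → ∀ r ∈ Ico (t (k - 1)) (t k),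
      ∫ u in r..(t k), (∫ v in (0 : ℝ)..u, fhat v) ≤ ∫ u in r..(t k), EDF u := by
  intro k hk1 hkm r ⟨htr, hrt⟩
  have hr : 0 ≤ r := ht0 ▸ ((strictMonoOn_Iic_of_lt_succ htlt).monotoneOn
    (mem_Iic.2 m.zero_le) (mem_Iic.2 (by omega)) (k - 1).zero_le).trans htr
  have hc : t k ∈ interior (Ici (0 : ℝ)) := by
    rw [interior_Ici]
    exact hr.trans_lt hrt
  have hψ := integrableOn_Ici_max_sub_max_zero (r := r) (c := t k) 0
  have hψsq : IntegrableOn (fun v => max (t k - max r v) 0 ^ 2) (Ici 0) := by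
    simpa only [sq] using hψ.mul_max_sub_max_zero
  have hfψ := hfint.mul_max_sub_max_zero (r := r) (c := t k)
  calc ∫ u in r..(t k), (∫ v in (0 : ℝ)..u, fhat v)
      = ∫ v in Ici 0, fhat v * max (t k - max r v) 0 :=
        integral_integral_eq_integral_mul_max_sub_max_zero
          (hfint.mono_set (Ioc_subset_Ioi_self.trans Ioi_subset_Ici_self)) hr hrt.le
    _ ≤ (n : ℝ)⁻¹ * ∑ i, max (t k - max r (x i)) 0 :=
        integral_mul_le_of_forall_lsCriterion_le x hfsq hfψ hψsq (sub_pos.2 (hkink k hk1 hkm))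
          fun ε hε hεgap => hopt _
            ((hfconv.sub_mul_max_sub_zero hc hεgap.le).sub_mul_max_sub_max_zero hrt.le hε.le)
            (hfint.sub (hψ.const_mul ε)) (integrableOn_sub_mul_sq hfsq hfψ hψsq ε)
    _ = ∫ u in r..(t k), EDF u := by
        simp only [hEDF, intervalIntegral.integral_const_mul, integral_card_filter_le x hrt.le]

/-- Backward integral inequality for the least squares estimator:
`∫_r^{t_k} 𝔽 ≥ ∫_r^{t_k} F̂` for all `r ∈ [t_{k-1}, t_k)`, where `F̂(u) = ∫_0^u f̂`. -/
theorem lse_backward_integral_inequality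
    (n : ℕ) (hn : 1 ≤ n) (x : Fin n → ℝ) (hx : ∀ i, 0 < x i)
    (EDF : ℝ → ℝ)
    (hEDF : ∀ r : ℝ, EDF r = (n : ℝ)⁻¹ * (Finset.univ.filter fun i => x i ≤ r).card)
    (fhat : ℝ → ℝ)
    (hfconv : ConvexOn ℝ (Ici 0) fhat) (hfint : IntegrableOn fhat (Ici 0))
    (hfsq : IntegrableOn (fun y => fhat y ^ 2) (Ici 0))
    (hopt : ∀ h : ℝ → ℝ, ConvexOn ℝ (Ici 0) h → IntegrableOn h (Ici 0) →
      IntegrableOn (fun y => h y ^ 2) (Ici 0) →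
      (∫ y in Ici (0 : ℝ), fhat y ^ 2) - (2 / n) * ∑ i, fhat (x i) ≤
        (∫ y in Ici (0 : ℝ), h y ^ 2) - (2 / n) * ∑ i, h (x i))
    (m : ℕ) (t : ℕ → ℝ)
    (ht0 : t 0 = 0) (htlt : ∀ k, k < m → t k < t (k + 1))
    (htmax : ∀ i, x i < t m)
    (haff : ∀ k, 1 ≤ k → k ≤ m → ∃ α β : ℝ,
      ∀ y ∈ Icc (t (k - 1)) (t k), fhat y = α * y + β)
    (htail : ∀ y, t m ≤ y → fhat y = 0)
    (hkink : ∀ k, 1 ≤ k → k ≤ m →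
      derivWithin fhat (Iic (t k)) (t k) < derivWithin fhat (Ici (t k)) (t k)) :
    ∀ k, 1 ≤ k → k ≤ m → ∀ r ∈ Ico (t (k - 1)) (t k),
      ∫ u in r..(t k), (∫ v in (0 : ℝ)..u, fhat v) ≤ ∫ u in r..(t k), EDF u :=
  lse_backward_integral_inequality_general n x EDF hEDF fhat hfconv hfint hfsq hopt m t ht0 htlt
    hkink
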